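/- Let l be a positive integer, n a nonzero integer, λ a nonnegative integer, 0 ≤ j ≤ |n|−1, 0 ≤ u ≤ l−1, and α ∈ ℝ. Then the function W_n^{j,u}F_{n,λ} : ℝ³ → ℂ satisfies ℒ_α(W_n^{j,u}F_{n,λ}) = (π|n|/2)(2λ + 1 − α·sgn n) · W_n^{j,u}F_{n,λ} pointwise on ℝ³; that is, the Weil–Brezin transform of the rescaled Hermite function is an eigenfunction of the Folland–Stein operator with eigenvalue (π|n|/2)(2λ + 1 − α·sgn n). -/

import Mathlib

noncomputable section

abbrev H3 := ℝ × ℝ × ℝ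

/-- P f = ∂f/∂p -/
def Pd (f : H3 → ℂ) : H3 → ℂ := fun x => deriv (fun p => f (p, x.2.1, x.2.2)) x.1

/-- S f = ∂f/∂s -/
def Sd (f : H3 → ℂ) : H3 → ℂ := fun x => deriv (fun s => f (x.1, x.2.1, s)) x.2.2

/-- Q f = ∂f/∂q + p ∂f/∂s -/
def Qd (f : H3 → ℂ) : H3 → ℂ := fun x =>
  deriv (fun q => f (x.1, q, x.2.2)) x.2.1 + (x.1 : ℂ) * Sd f x

/-- Folland–Stein operator ℒ_α f = (1/4)(−(P²f + Q²f) + iα Sf) -/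
def FS (α : ℝ) (f : H3 → ℂ) : H3 → ℂ := fun x =>
  (1 / 4 : ℂ) * (-(Pd (Pd f) x + Qd (Qd f) x) + Complex.I * (α : ℂ) * Sd f x)

/-- Weil–Brezin transform associated to the lattice N_l -/
def WB (l : ℕ) (n j u : ℤ) (g : ℝ → ℂ) : H3 → ℂ := fun x =>
  Complex.exp (2 * Real.pi * Complex.I * (n : ℂ) * (x.2.2 : ℂ)) *
    ∑' k : ℤ,
      g (x.1 + (k : ℝ) + (j : ℝ) / |(n : ℝ)| + (u : ℝ) / ((l : ℝ) * (n : ℝ))) *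
        Complex.exp (2 * Real.pi * Complex.I * (n : ℂ) *
          ((((k : ℝ) + (j : ℝ) / |(n : ℝ)| + (u : ℝ) / ((l : ℝ) * (n : ℝ))) : ℝ) : ℂ) *
          (x.2.1 : ℂ))

/-- physicists' Hermite polynomials: H₀ = 1, H_{λ+1} = 2X·H_λ − H_λ' -/
def physHermite : ℕ → Polynomial ℝ
  | 0 => 1
  | (lam + 1) => 2 * Polynomial.X * physHermite lam - (physHermite lam).derivative

/-- F_{n,λ}(x) = H_λ(√(2π|n|) x) e^{−π|n|x²} -/
def Fnl (n : ℤ) (lam : ℕ) : ℝ → ℂ := fun x =>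
  (((physHermite lam).eval (Real.sqrt (2 * Real.pi * |(n : ℝ)|) * x) *
    Real.exp (-Real.pi * |(n : ℝ)| * x ^ 2) : ℝ) : ℂ)


open Polynomial

lemma physHermite_succ (m : ℕ) :
    physHermite (m+1) = 2 * X * physHermite m - (physHermite m).derivative := rfl

lemma physHermite_deriv (m : ℕ) :
    (physHermite (m+1)).derivative = C ((2:ℝ)*(m+1)) * physHermite m := by
  induction m with
  | zero =>
      simp only [physHermite, derivative_sub, derivative_mul, derivative_one, derivative_X]
      simp only [C_mul, C_add, C_1, map_natCast, map_ofNat, derivative_ofNat, derivative_one, derivative_zero]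
      push_cast
      ring
  | succ m ih =>
      rw [physHermite_succ (m+1), derivative_sub, derivative_mul, ih, physHermite_succ m]
      rw [derivative_mul, derivative_mul, derivative_C, derivative_X]
      simp only [C_mul, C_add, C_1, map_natCast, map_ofNat, derivative_ofNat, derivative_one, derivative_zero]
      push_cast
      ring

lemma physHermite_ode (m : ℕ) :
    (physHermite m).derivative.derivative
      = 2*X*(physHermite m).derivative - C ((2:ℝ)*m) * physHermite m := by
  cases m with
  | zero => simp [physHermite]
  | succ m =>
      rw [physHermite_deriv m, derivative_mul, derivative_C, physHermite_succ m]
      simp only [C_mul, C_add, C_1, map_natCast, map_ofNat, derivative_ofNat, derivative_one, derivative_zero]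
      push_cast
      ring

def gb (b : ℝ) (P : Polynomial ℝ) : ℝ → ℂ :=
  fun x => ((P.eval x * Real.exp (-b * x^2) : ℝ) : ℂ)

def pdp (b : ℝ) (P : Polynomial ℝ) : Polynomial ℝ :=
  derivative P - C (2*b) * X * P

lemma gb_hasDerivAt (b : ℝ) (P : Polynomial ℝ) (x : ℝ) :
    HasDerivAt (gb b P) (gb b (pdp b P) x) x := by
  have h1 : HasDerivAt (fun x : ℝ => -b * x^2) (-b * (2*x)) x := by
    simpa using ((hasDerivAt_pow 2 x).const_mul (-b))
  have h2 := ((P.hasDerivAt x).mul h1.exp)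
  have h3 : eval x (derivative P) * Real.exp (-b*x^2)
        + eval x P * (Real.exp (-b*x^2) * (-b*(2*x)))
      = eval x (pdp b P) * Real.exp (-b*x^2) := by
    simp [pdp]; ring
  rw [h3] at h2
  exact h2.ofReal_comp

lemma gb_norm (b : ℝ) (P : Polynomial ℝ) (x : ℝ) :
    ‖gb b P x‖ = |P.eval x| * Real.exp (-b * x^2) := by
  rw [gb, Complex.norm_real, Real.norm_eq_abs, abs_mul, Real.abs_exp]

lemma pow_gauss_bound {b : ℝ} (hb : 0 < b) (i : ℕ) :
    ∀ x : ℝ, |x|^i * Real.exp (-b * x^2) ≤ (i.factorial / b^i + 1) := by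
  intro x
  have hexp : Real.exp (-b*x^2) ≤ 1 := by
    rw [Real.exp_le_one_iff]; nlinarith [sq_nonneg x]
  have h1 : |x|^i ≤ x^(2*i) + 1 := by
    rcases le_or_gt (|x|) 1 with h | h
    · have h0 : |x|^i ≤ 1 := pow_le_one₀ (abs_nonneg x) h
      have : (0:ℝ) ≤ x^(2*i) := by rw [pow_mul]; positivity
      linarith
    · have h2 : |x|^i ≤ |x|^(2*i) := pow_le_pow_right₀ h.le (by omega)
      have h3 : |x|^(2*i) = x^(2*i) := by
        rw [← abs_pow, abs_of_nonneg]
        rw [pow_mul]; positivity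
      nlinarith
  have h4 : x^(2*i) * Real.exp (-b*x^2) ≤ i.factorial / b^i := by
    have h5 : (b*x^2)^i / i.factorial ≤ Real.exp (b*x^2) :=
      Real.pow_div_factorial_le_exp _ (by positivity) i
    have h6 : Real.exp (-b*x^2) = (Real.exp (b*x^2))⁻¹ := by
      rw [← Real.exp_neg]; ring_nf
    have hbi : (0:ℝ) < b^i := by positivity
    have hfac : (0:ℝ) < i.factorial := by positivity
    have hexppos : (0:ℝ) < Real.exp (b*x^2) := Real.exp_pos _
    rw [div_le_iff₀ hfac, mul_pow] at h5
    rw [h6, pow_mul, inv_eq_one_div, mul_one_div, div_le_div_iff₀ hexppos hbi]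
    nlinarith
  calc |x|^i * Real.exp (-b*x^2) ≤ (x^(2*i) + 1) * Real.exp (-b*x^2) := by
        apply mul_le_mul_of_nonneg_right h1 (Real.exp_nonneg _)
  _ = x^(2*i) * Real.exp (-b*x^2) + Real.exp (-b*x^2) := by ring
  _ ≤ i.factorial / b^i + 1 := add_le_add h4 hexp

lemma poly_gauss_bound {b : ℝ} (hb : 0 < b) (P : Polynomial ℝ) :
    ∃ C : ℝ, 0 ≤ C ∧ ∀ x : ℝ, |P.eval x| * Real.exp (-b * x^2) ≤ C := by
  induction P using Polynomial.induction_on' with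
  | add p q hp hq =>
      obtain ⟨C1, hC1, h1⟩ := hp
      obtain ⟨C2, hC2, h2⟩ := hq
      refine ⟨C1 + C2, by linarith, fun x => ?_⟩
      calc |(p+q).eval x| * Real.exp (-b*x^2)
          ≤ (|p.eval x| + |q.eval x|) * Real.exp (-b*x^2) := by
            apply mul_le_mul_of_nonneg_right _ (Real.exp_nonneg _)
            simpa using abs_add_le (p.eval x) (q.eval x)
      _ = |p.eval x| * Real.exp (-b*x^2) + |q.eval x| * Real.exp (-b*x^2) := by ring
      _ ≤ C1 + C2 := add_le_add (h1 x) (h2 x)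
  | monomial i a =>
      refine ⟨|a| * (i.factorial / b^i + 1), by positivity, fun x => ?_⟩
      have h0 : |((monomial i) a).eval x| = |a| * |x|^i := by
        simp [abs_mul, abs_pow]
      rw [h0, mul_assoc]
      apply mul_le_mul_of_nonneg_left (pow_gauss_bound hb i x) (abs_nonneg a)

lemma gb_decay {b : ℝ} (hb : 0 < b) (P : Polynomial ℝ) :
    ∃ C : ℝ, 0 ≤ C ∧ ∀ x : ℝ,
      ‖gb b P x‖ ≤ C * (1+x^2)⁻¹ * (1+x^2)⁻¹ := by
  obtain ⟨C, hC, h⟩ := poly_gauss_bound hb (((1 + X^2)^2) * P)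
  refine ⟨C, hC, fun x => ?_⟩
  have h1 := h x
  have h2 : |(((1 + X^2)^2) * P).eval x| = (1+x^2)^2 * |P.eval x| := by
    rw [eval_mul, abs_mul]
    congr 1
    rw [abs_of_nonneg]
    · simp
    · simp; positivity
  rw [h2] at h1
  rw [gb_norm]
  have hx : (0:ℝ) < 1 + x^2 := by positivity
  have e : C * (1+x^2)⁻¹ * (1+x^2)⁻¹ = C / (1+x^2)^2 := by
    rw [eq_div_iff (by positivity : ((1:ℝ)+x^2)^2 ≠ 0)]
    field_simp
  rw [e, le_div_iff₀ (by positivity)]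
  nlinarith [Real.exp_nonneg (-b*x^2), abs_nonneg (P.eval x)]

lemma summable_inv_one_add_sq (w : ℝ) :
    Summable (fun k : ℤ => (1 + ((k:ℝ)+w)^2)⁻¹) := by
  have hbase : Summable (fun k : ℤ => 4 * (1 / ((k:ℝ))^2)) :=
    (Real.summable_one_div_int_pow.2 one_lt_two).mul_left 4
  apply Summable.of_norm_bounded_eventually hbase
  have hfin : {k : ℤ | ¬ 2*(|w|+1) ≤ |(k:ℝ)|}.Finite := by
    apply Set.Finite.subset (Set.finite_Icc (⌈-(2*(|w|+1))⌉) ⌊2*(|w|+1)⌋)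
    intro k hk
    simp only [Set.mem_setOf_eq, not_le] at hk
    rw [abs_lt] at hk
    constructor
    · exact Int.ceil_le.2 (by exact_mod_cast hk.1.le)
    · exact Int.le_floor.2 (by exact_mod_cast hk.2.le)
  filter_upwards [hfin.eventually_cofinite_notMem] with k hk
  simp only [Set.mem_setOf_eq, not_not] at hk
  have hw : 0 ≤ |w| := abs_nonneg w
  have habs : |(k:ℝ)| - |w| ≤ |(k:ℝ)+w| := by
    have h0 : |(k:ℝ)| = |((k:ℝ)+w) + (-w)| := by ring_nf
    have h1 := abs_add_le ((k:ℝ)+w) (-w)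
    rw [abs_neg] at h1
    linarith [h0 ▸ h1]
  have h1 : |w| + 1 ≤ |(k:ℝ)| / 2 := by linarith
  have h2 : ((k:ℝ))^2/4 ≤ ((k:ℝ)+w)^2 := by
    nlinarith [sq_abs ((k:ℝ)+w), sq_abs (k:ℝ), abs_nonneg ((k:ℝ)+w), abs_nonneg (k:ℝ)]
  have hk2 : (0:ℝ) < ((k:ℝ))^2 := by
    have h3 : (2:ℝ) ≤ |(k:ℝ)| := by linarith
    nlinarith [sq_abs (k:ℝ)]
  rw [Real.norm_eq_abs, abs_of_pos (by positivity)]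
  have h3 : (1+((k:ℝ)+w)^2)⁻¹ ≤ (((k:ℝ))^2/4)⁻¹ :=
    inv_anti₀ (by positivity) (by nlinarith)
  have h4 : (((k:ℝ))^2/4)⁻¹ = 4*(1/((k:ℝ))^2) := by field_simp
  linarith [h4 ▸ h3]

lemma inv_one_add_sq_le_one (x : ℝ) : (1 + x^2)⁻¹ ≤ 1 := by
  rw [inv_le_one_iff₀]; right; nlinarith [sq_nonneg x]

lemma inv_sq_ball {x y : ℝ} (h : |x - y| ≤ 1) : (1+x^2)⁻¹ ≤ 5*(1+y^2)⁻¹ := by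
  have h2 : (x-y)^2 ≤ 1 := by nlinarith [sq_abs (x-y), abs_nonneg (x-y)]
  have h1 : 1+y^2 ≤ 5*(1+x^2) := by nlinarith [sq_nonneg (x-y), sq_nonneg (x+y)]
  have hx : (0:ℝ) < 1+x^2 := by positivity
  have hy : (0:ℝ) < 1+y^2 := by positivity
  rw [inv_eq_one_div, inv_eq_one_div, mul_one_div, div_le_div_iff₀ hx hy]
  linarith

def aδ (δ : ℝ) (k : ℤ) : ℝ := k + δ

def Ek (n : ℤ) (δ : ℝ) (k : ℤ) (q : ℝ) : ℂ :=
  Complex.exp (2*Real.pi*Complex.I*(n:ℂ)*((aδ δ k : ℝ):ℂ)*(q:ℂ))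

lemma Ek_norm (n : ℤ) (δ : ℝ) (k : ℤ) (q : ℝ) : ‖Ek n δ k q‖ = 1 := by
  rw [Ek, show 2*(Real.pi:ℂ)*Complex.I*(n:ℂ)*((aδ δ k : ℝ):ℂ)*(q:ℂ)
      = ((2*Real.pi*(n:ℝ)*(aδ δ k)*q : ℝ):ℂ)*Complex.I by push_cast; ring]
  rw [Complex.norm_exp_ofReal_mul_I]

def TT (n : ℤ) (δ b : ℝ) (P : Polynomial ℝ) (p q : ℝ) : ℂ :=
  ∑' k : ℤ, gb b P (p + aδ δ k) * Ek n δ k q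

lemma term_norm_le {b : ℝ} {P : Polynomial ℝ} {Cb : ℝ}
    (hdec : ∀ x : ℝ, ‖gb b P x‖ ≤ Cb * (1+x^2)⁻¹ * (1+x^2)⁻¹) (hC : 0 ≤ Cb)
    (n : ℤ) (δ : ℝ) (p q : ℝ) (k : ℤ) :
    ‖gb b P (p + aδ δ k) * Ek n δ k q‖ ≤ Cb * (1 + ((k:ℝ)+(p+δ))^2)⁻¹ := by
  rw [norm_mul, Ek_norm, mul_one]
  have e : p + aδ δ k = (k:ℝ) + (p+δ) := by rw [aδ]; ring
  calc ‖gb b P (p + aδ δ k)‖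
      ≤ Cb * (1+(p + aδ δ k)^2)⁻¹ * (1+(p + aδ δ k)^2)⁻¹ := hdec _
  _ ≤ Cb * (1+(p + aδ δ k)^2)⁻¹ * 1 := by
      apply mul_le_mul_of_nonneg_left (inv_one_add_sq_le_one _)
      positivity
  _ = Cb * (1 + ((k:ℝ)+(p+δ))^2)⁻¹ := by rw [mul_one, e]

lemma summable_term {b : ℝ} (hb : 0 < b) (P : Polynomial ℝ) (n : ℤ) (δ p q : ℝ) :
    Summable (fun k : ℤ => gb b P (p + aδ δ k) * Ek n δ k q) := by
  obtain ⟨Cb, hC, hdec⟩ := gb_decay hb P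
  apply Summable.of_norm_bounded
    ((summable_inv_one_add_sq (p+δ)).mul_left Cb)
  exact term_norm_le hdec hC n δ p q

lemma hasDerivAt_TT_p {b : ℝ} (hb : 0 < b) (P : Polynomial ℝ) (n : ℤ) (δ p q : ℝ) :
    HasDerivAt (fun y => TT n δ b P y q) (TT n δ b (pdp b P) p q) p := by
  obtain ⟨Cb, hC, hdec⟩ := gb_decay hb (pdp b P)
  have := hasDerivAt_tsum_of_isPreconnected
    (u := fun k : ℤ => 5*Cb * (1 + ((k:ℝ)+(p+δ))^2)⁻¹)
    (g := fun k y => gb b P (y + aδ δ k) * Ek n δ k q)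
    (g' := fun k y => gb b (pdp b P) (y + aδ δ k) * Ek n δ k q)
    ((summable_inv_one_add_sq (p+δ)).mul_left (5*Cb))
    Metric.isOpen_ball (convex_ball p 1).isPreconnected
    (fun k y _ => by
      have hg : HasDerivAt (fun y : ℝ => gb b P (y + aδ δ k))
          (gb b (pdp b P) (y + aδ δ k)) y :=
        HasDerivAt.comp_add_const y (aδ δ k) (gb_hasDerivAt b P (y + aδ δ k))
      exact hg.mul_const (Ek n δ k q))
    (fun k y hy => by
      rw [norm_mul, Ek_norm, mul_one]
      have hyp : |(y + aδ δ k) - (p + aδ δ k)| ≤ 1 := by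
        rw [Metric.mem_ball, Real.dist_eq] at hy
        have : (y + aδ δ k) - (p + aδ δ k) = y - p := by ring
        rw [this]; exact hy.le
      have e : p + aδ δ k = (k:ℝ) + (p+δ) := by rw [aδ]; ring
      calc ‖gb b (pdp b P) (y + aδ δ k)‖
          ≤ Cb * (1+(y + aδ δ k)^2)⁻¹ * (1+(y + aδ δ k)^2)⁻¹ := hdec _
      _ ≤ Cb * (1+(y + aδ δ k)^2)⁻¹ * 1 := by
          apply mul_le_mul_of_nonneg_left (inv_one_add_sq_le_one _)
          positivity
      _ = Cb * (1+(y + aδ δ k)^2)⁻¹ := by rw [mul_one]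
      _ ≤ Cb * (5 * (1+(p + aδ δ k)^2)⁻¹) :=
          mul_le_mul_of_nonneg_left (inv_sq_ball hyp) hC
      _ = 5*Cb * (1 + ((k:ℝ)+(p+δ))^2)⁻¹ := by rw [e]; ring)
    (Metric.mem_ball_self one_pos)
    (summable_term hb P n δ p q)
    (Metric.mem_ball_self one_pos)
  exact this

lemma gb_shift_mul (b : ℝ) (P : Polynomial ℝ) (p a : ℝ) :
    gb b (X*P - C p * P) (p + a) = ((a : ℝ):ℂ) * gb b P (p + a) := by
  simp only [gb, eval_sub, eval_mul, eval_X, eval_C]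
  push_cast
  ring

lemma hasDerivAt_TT_q {b : ℝ} (hb : 0 < b) (P : Polynomial ℝ) (n : ℤ) (δ p q : ℝ) :
    HasDerivAt (fun z => TT n δ b P p z)
      ((2*Real.pi*Complex.I*(n:ℂ)) * TT n δ b (X*P - C p * P) p q) q := by
  obtain ⟨Cb, hC, hdec⟩ := gb_decay hb (X*P - C p * P)
  have key : ∀ (k : ℤ) (z : ℝ), HasDerivAt (fun z : ℝ => gb b P (p + aδ δ k) * Ek n δ k z)
      ((2*Real.pi*Complex.I*(n:ℂ)) * (gb b (X*P - C p * P) (p + aδ δ k) * Ek n δ k z)) z := by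
    intro k z
    have h1 : HasDerivAt (fun w : ℂ => Complex.exp (2*Real.pi*Complex.I*(n:ℂ)*((aδ δ k : ℝ):ℂ)*w))
        (Complex.exp (2*Real.pi*Complex.I*(n:ℂ)*((aδ δ k : ℝ):ℂ)*(z:ℂ)) *
          (2*Real.pi*Complex.I*(n:ℂ)*((aδ δ k : ℝ):ℂ))) (z:ℂ) := by
      simpa using (((hasDerivAt_id (z:ℂ)).const_mul
        (2*Real.pi*Complex.I*(n:ℂ)*((aδ δ k : ℝ):ℂ))).cexp)
    have h2 := (h1.comp_ofReal).const_mul (gb b P (p + aδ δ k))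
    have e : gb b P (p + aδ δ k) *
        (Complex.exp (2*Real.pi*Complex.I*(n:ℂ)*((aδ δ k : ℝ):ℂ)*(z:ℂ)) *
          (2*Real.pi*Complex.I*(n:ℂ)*((aδ δ k : ℝ):ℂ)))
        = (2*Real.pi*Complex.I*(n:ℂ)) * (gb b (X*P - C p * P) (p + aδ δ k) * Ek n δ k z) := by
      rw [gb_shift_mul, Ek]; ring
    rw [e] at h2
    exact h2
  have := hasDerivAt_tsum
    (u := fun k : ℤ => (2*Real.pi*|(n:ℝ)|) * (Cb * (1 + ((k:ℝ)+(p+δ))^2)⁻¹))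
    (g := fun k z => gb b P (p + aδ δ k) * Ek n δ k z)
    (g' := fun k z => (2*Real.pi*Complex.I*(n:ℂ)) * (gb b (X*P - C p * P) (p + aδ δ k) * Ek n δ k z))
    (y₀ := q)
    (((summable_inv_one_add_sq (p+δ)).mul_left Cb).mul_left (2*Real.pi*|(n:ℝ)|))
    key
    (fun k z => by
      rw [norm_mul]
      have h3 : ‖2*(Real.pi:ℂ)*Complex.I*(n:ℂ)‖ = 2*Real.pi*|(n:ℝ)| := by
        simp [norm_mul, Complex.norm_real, Real.norm_eq_abs,
          abs_of_nonneg Real.pi_pos.le, Complex.norm_intCast]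
      rw [h3]
      apply mul_le_mul_of_nonneg_left (term_norm_le hdec hC n δ p z k)
      positivity)
    (summable_term hb P n δ p q) q
  have e2 : ∑' (k : ℤ), (2*Real.pi*Complex.I*(n:ℂ)) *
      (gb b (X*P - C p * P) (p + aδ δ k) * Ek n δ k q)
      = (2*Real.pi*Complex.I*(n:ℂ)) * TT n δ b (X*P - C p * P) p q := by
    rw [TT, tsum_mul_left]
  rw [e2] at this
  exact this

lemma TT_add {b : ℝ} (hb : 0 < b) (P1 P2 : Polynomial ℝ) (n : ℤ) (δ p q : ℝ) :
    TT n δ b (P1 + P2) p q = TT n δ b P1 p q + TT n δ b P2 p q := by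
  rw [TT, TT, TT, ← Summable.tsum_add (summable_term hb P1 n δ p q) (summable_term hb P2 n δ p q)]
  apply tsum_congr
  intro k
  simp only [gb, eval_add]
  push_cast
  ring

lemma TT_const_mul {b : ℝ} (P : Polynomial ℝ) (r : ℝ) (n : ℤ) (δ p q : ℝ) :
    TT n δ b (C r * P) p q = (r:ℂ) * TT n δ b P p q := by
  rw [TT, TT, ← tsum_mul_left]
  apply tsum_congr
  intro k
  simp only [gb, eval_mul, eval_C]
  push_cast
  ring

lemma TT_sub {b : ℝ} (hb : 0 < b) (P1 P2 : Polynomial ℝ) (n : ℤ) (δ p q : ℝ) :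
    TT n δ b (P1 - P2) p q = TT n δ b P1 p q - TT n δ b P2 p q := by
  have h := TT_add hb (P1 - P2) P2 n δ p q
  rw [sub_add_cancel] at h
  rw [h]
  ring

def Wf (n : ℤ) (δ b : ℝ) (P : Polynomial ℝ) : H3 → ℂ :=
  fun x => Complex.exp (2*Real.pi*Complex.I*(n:ℂ)*(x.2.2:ℂ)) * TT n δ b P x.1 x.2.1

lemma hasDerivAt_Wf_s (n : ℤ) (δ b : ℝ) (P : Polynomial ℝ) (x : H3) :
    HasDerivAt (fun s : ℝ => Wf n δ b P (x.1, x.2.1, s))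
      ((2*Real.pi*Complex.I*(n:ℂ)) * Wf n δ b P x) x.2.2 := by
  have h1 : HasDerivAt (fun w : ℂ => Complex.exp (2*Real.pi*Complex.I*(n:ℂ)*w))
      (Complex.exp (2*Real.pi*Complex.I*(n:ℂ)*(x.2.2:ℂ)) * (2*Real.pi*Complex.I*(n:ℂ)))
      (x.2.2:ℂ) := by
    simpa using ((hasDerivAt_id ((x.2.2:ℝ):ℂ)).const_mul (2*Real.pi*Complex.I*(n:ℂ))).cexp
  have h2 := (h1.comp_ofReal).mul_const (TT n δ b P x.1 x.2.1)
  have e : Complex.exp (2*Real.pi*Complex.I*(n:ℂ)*(x.2.2:ℂ)) * (2*Real.pi*Complex.I*(n:ℂ))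
        * TT n δ b P x.1 x.2.1
      = (2*Real.pi*Complex.I*(n:ℂ)) * Wf n δ b P x := by
    rw [Wf]; ring
  rw [e] at h2
  exact h2

lemma Sd_Wf (n : ℤ) (δ b : ℝ) (P : Polynomial ℝ) :
    Sd (Wf n δ b P) = fun x => (2*Real.pi*Complex.I*(n:ℂ)) * Wf n δ b P x :=
  funext fun x => (hasDerivAt_Wf_s n δ b P x).deriv

lemma Pd_Wf {b : ℝ} (hb : 0 < b) (n : ℤ) (δ : ℝ) (P : Polynomial ℝ) :
    Pd (Wf n δ b P) = Wf n δ b (pdp b P) :=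
  funext fun x =>
    ((hasDerivAt_TT_p hb P n δ x.1 x.2.1).const_mul
      (Complex.exp (2*Real.pi*Complex.I*(n:ℂ)*(x.2.2:ℂ)))).deriv

lemma hasDerivAt_Wf_q {b : ℝ} (hb : 0 < b) (n : ℤ) (δ : ℝ) (P : Polynomial ℝ) (x : H3) :
    HasDerivAt (fun q : ℝ => Wf n δ b P (x.1, q, x.2.2))
      (Complex.exp (2*Real.pi*Complex.I*(n:ℂ)*(x.2.2:ℂ)) *
        ((2*Real.pi*Complex.I*(n:ℂ)) * TT n δ b (X*P - C x.1 * P) x.1 x.2.1)) x.2.1 := by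
  have h := (hasDerivAt_TT_q hb P n δ x.1 x.2.1).const_mul
    (Complex.exp (2*Real.pi*Complex.I*(n:ℂ)*(x.2.2:ℂ)))
  exact h

lemma Qd_Wf {b : ℝ} (hb : 0 < b) (n : ℤ) (δ : ℝ) (P : Polynomial ℝ) :
    Qd (Wf n δ b P) = fun x => (2*Real.pi*Complex.I*(n:ℂ)) * Wf n δ b (X*P) x := by
  funext x
  rw [Qd]
  rw [(hasDerivAt_Wf_q hb n δ P x).deriv, Sd_Wf]
  rw [TT_sub hb, TT_const_mul]
  simp only [Wf]
  ring

lemma Qd_const_mul_Wf {b : ℝ} (hb : 0 < b) (n : ℤ) (δ : ℝ) (c : ℂ) (P : Polynomial ℝ) :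
    Qd (fun y => c * Wf n δ b P y)
      = fun x => c * ((2*Real.pi*Complex.I*(n:ℂ)) * Wf n δ b (X*P) x) := by
  funext x
  rw [Qd]
  have hq := ((hasDerivAt_Wf_q hb n δ P x).const_mul c).deriv
  have hs := ((hasDerivAt_Wf_s n δ b P x).const_mul c).deriv
  rw [Sd, hs, hq]
  rw [TT_sub hb, TT_const_mul]
  simp only [Wf]
  ring

lemma key_poly (b cc : ℝ) (hc : cc^2 = 2*b) (lam : ℕ) :
    pdp b (pdp b ((physHermite lam).comp (C cc * X)))
      = C (4*b^2) * (X^2 * ((physHermite lam).comp (C cc * X)))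
        - C (2*b*(2*lam+1)) * ((physHermite lam).comp (C cc * X)) := by
  have hdc : derivative (C cc * X : Polynomial ℝ) = C cc := by
    rw [derivative_mul, derivative_C, derivative_X]; ring
  have hd : ∀ Q : Polynomial ℝ, derivative (Q.comp (C cc * X))
      = C cc * ((derivative Q).comp (C cc * X)) := by
    intro Q; rw [derivative_comp, hdc]
  rw [pdp, pdp, derivative_sub, derivative_mul, derivative_mul, derivative_C, derivative_X,
    hd, derivative_mul, derivative_C, hd]
  apply Polynomial.funext
  intro y
  have hode : ∀ t : ℝ, eval t (derivative (derivative (physHermite lam)))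
      = 2*t*eval t (derivative (physHermite lam)) - 2*(lam:ℝ)*eval t (physHermite lam) := by
    intro t
    rw [physHermite_ode]
    simp
  simp only [eval_sub, eval_mul, eval_add, eval_C, eval_X, eval_pow, eval_comp, eval_ofNat,
    eval_one, zero_mul, eval_zero, mul_zero, zero_add, add_zero]
  rw [hode (cc*y)]
  linear_combination (2*cc*y*(eval (cc*y) (derivative (physHermite lam)))
    - 2*(lam:ℝ)*(eval (cc*y) (physHermite lam))) * hc

lemma Fnl_eq_gb (n : ℤ) (lam : ℕ) (y : ℝ) :
    Fnl n lam y = gb (Real.pi * |(n:ℝ)|)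
      ((physHermite lam).comp (C (Real.sqrt (2*Real.pi*|(n:ℝ)|)) * X)) y := by
  rw [Fnl, gb]
  apply congrArg (Complex.ofReal)
  rw [eval_comp, eval_mul, eval_C, eval_X]
  ring_nf

lemma WB_eq_Wf (l : ℕ) (n j u : ℤ) (lam : ℕ) :
    WB l n j u (Fnl n lam)
      = Wf n ((j:ℝ)/|(n:ℝ)| + (u:ℝ)/((l:ℝ)*(n:ℝ))) (Real.pi * |(n:ℝ)|)
          ((physHermite lam).comp (C (Real.sqrt (2*Real.pi*|(n:ℝ)|)) * X)) := by
  funext x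
  rw [WB, Wf]
  congr 1
  apply tsum_congr
  intro k
  rw [Fnl_eq_gb]
  have h1 : x.1 + (k:ℝ) + (j:ℝ)/|(n:ℝ)| + (u:ℝ)/((l:ℝ)*(n:ℝ))
      = x.1 + aδ ((j:ℝ)/|(n:ℝ)| + (u:ℝ)/((l:ℝ)*(n:ℝ))) k := by rw [aδ]; ring
  have h2 : ((k:ℝ) + (j:ℝ)/|(n:ℝ)| + (u:ℝ)/((l:ℝ)*(n:ℝ)) : ℝ)
      = aδ ((j:ℝ)/|(n:ℝ)| + (u:ℝ)/((l:ℝ)*(n:ℝ))) k := by rw [aδ]; ring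
  rw [h1, h2]
  rfl

lemma Wf_sub {b : ℝ} (hb : 0 < b) (n : ℤ) (δ : ℝ) (P1 P2 : Polynomial ℝ) (x : H3) :
    Wf n δ b (P1 - P2) x = Wf n δ b P1 x - Wf n δ b P2 x := by
  simp only [Wf]
  rw [TT_sub hb]
  ring

lemma Wf_const_mul {b : ℝ} (n : ℤ) (δ : ℝ) (r : ℝ) (P : Polynomial ℝ) (x : H3) :
    Wf n δ b (C r * P) x = (r:ℂ) * Wf n δ b P x := by
  simp only [Wf]
  rw [TT_const_mul]
  ring


/-- the Weil–Brezin transform of the rescaled Hermite function is an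
eigenfunction of the Folland–Stein operator with eigenvalue (π|n|/2)(2λ+1−α·sgn n). -/
theorem FS_WB_hermite_eigenfunction (l : ℕ) (hl : 0 < l) (n : ℤ) (hn : n ≠ 0)
    (lam : ℕ) (j u : ℤ) (hj0 : 0 ≤ j) (hj1 : j ≤ |n| - 1)
    (hu0 : 0 ≤ u) (hu1 : u ≤ (l : ℤ) - 1) (α : ℝ) :
    ∀ x : H3, FS α (WB l n j u (Fnl n lam)) x =
      ((Real.pi * |(n : ℝ)| / 2 * (2 * (lam : ℝ) + 1 - α * (n.sign : ℝ)) : ℝ) : ℂ) *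
        WB l n j u (Fnl n lam) x := by
  intro x
  have hna : (0:ℝ) < |(n:ℝ)| := abs_pos.2 (by exact_mod_cast hn)
  have hb : (0:ℝ) < Real.pi * |(n:ℝ)| := mul_pos Real.pi_pos hna
  have hc : (Real.sqrt (2*Real.pi*|(n:ℝ)|))^2 = 2*(Real.pi * |(n:ℝ)|) := by
    rw [Real.sq_sqrt (by positivity)]; ring
  rw [WB_eq_Wf]
  simp only [FS]
  rw [Pd_Wf hb, Pd_Wf hb, Qd_Wf hb, Qd_const_mul_Wf hb, Sd_Wf]
  rw [key_poly _ _ hc lam]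
  rw [Wf_sub hb, Wf_const_mul, Wf_const_mul]
  rw [show (X*(X*((physHermite lam).comp (C (Real.sqrt (2*Real.pi*|(n:ℝ)|)) * X)))
      : Polynomial ℝ)
    = X^2*((physHermite lam).comp (C (Real.sqrt (2*Real.pi*|(n:ℝ)|)) * X)) by ring]
  have habs : ((|(n:ℝ)| : ℝ):ℂ)^2 = ((n:ℤ):ℂ)^2 := by
    have := sq_abs ((n:ℝ))
    exact_mod_cast congrArg (Complex.ofReal) this
  have hsign : ((n.sign : ℤ):ℂ) * ((|(n:ℝ)| : ℝ):ℂ) = ((n:ℤ):ℂ) := by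
    have h1 := Int.sign_mul_abs n
    have h2 : (|(n:ℝ)| : ℝ) = ((|n| : ℤ) : ℝ) := by push_cast; ring
    rw [h2]
    exact_mod_cast congrArg (Int.cast : ℤ → ℂ) h1
  push_cast
  linear_combination
    (-(Real.pi:ℂ)^2 * Wf n ((j:ℝ)/|(n:ℝ)| + (u:ℝ)/((l:ℝ)*(n:ℝ))) (Real.pi * |(n:ℝ)|)
        (X^2*((physHermite lam).comp (C (Real.sqrt (2*Real.pi*|(n:ℝ)|)) * X))) x) * habs
    + (-(Real.pi:ℂ)^2*((n:ℤ):ℂ)^2 * Wf n ((j:ℝ)/|(n:ℝ)| + (u:ℝ)/((l:ℝ)*(n:ℝ))) (Real.pi * |(n:ℝ)|)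
        (X^2*((physHermite lam).comp (C (Real.sqrt (2*Real.pi*|(n:ℝ)|)) * X))) x
      + (1/2)*(Real.pi:ℂ)*(α:ℂ)*((n:ℤ):ℂ) * Wf n ((j:ℝ)/|(n:ℝ)| + (u:ℝ)/((l:ℝ)*(n:ℝ))) (Real.pi * |(n:ℝ)|)
        ((physHermite lam).comp (C (Real.sqrt (2*Real.pi*|(n:ℝ)|)) * X)) x) * Complex.I_sq
    + ((1/2)*(Real.pi:ℂ)*(α:ℂ) * Wf n ((j:ℝ)/|(n:ℝ)| + (u:ℝ)/((l:ℝ)*(n:ℝ))) (Real.pi * |(n:ℝ)|)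
        ((physHermite lam).comp (C (Real.sqrt (2*Real.pi*|(n:ℝ)|)) * X)) x) * hsign


end
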